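/- Assume: (i) F is l̲-strongly monotone with l̲ > 0, and both F and 𝐅 are l-Lipschitz with l > 0; (ii) L ∈ ℝ^{N×N} is the Laplacian of a weight-balanced digraph (L 1 = 0 and 1ᵀL = 0) and λ₂ > 0 satisfies xᵀ Sym(L) x ≥ λ₂ ‖x‖² for all x ∈ ℝ^N with 1ᵀx = 0, where Sym(L) = (L + Lᵀ)/2; (iii) z* ∈ ℝ^N and Z* = 1 (z*)ᵀ; (iv) α > (1/λ₂)(l²/l̲ + l). Then there exists ν > 0 such that for every Z ∈ ℝ^{N×N}, α ⟨Z − Z*, L (Z − Z*)⟩ + Σ_{i=1}^N (Z − Z*)_{ii} (𝐅(Z)_i − 𝐅(Z*)_i) ≥ ν ‖Z − Z*‖², where ⟨A, B⟩ = tr(AᵀB) and ‖·‖ is the Frobenius norm. (Consequently, along any trajectory of Ż = −α L Z − diag(𝐅(Z)) with equilibrium Z*, the function V = ½‖Z − Z*‖² satisfies V̇ ≤ −2νV.) -/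

import Mathlib

open scoped BigOperators

/-- Euclidean norm of a vector in `ℝ^N`. -/
noncomputable def vnorm {N : ℕ} (x : Fin N → ℝ) : ℝ := Real.sqrt (∑ i, (x i) ^ 2)

/-- Frobenius norm of a matrix in `ℝ^{N×N}`. -/
noncomputable def mnorm {N : ℕ} (A : Matrix (Fin N) (Fin N) ℝ) : ℝ :=
  Real.sqrt (∑ i, ∑ j, (A i j) ^ 2)

/-!
Split `Z - Z*` into its consensus part `1 yᵀ` (column means) and its disagreement `e`, whose
columns sum to zero. Weight balance makes the Laplacian blind to `1 yᵀ`, so the coupling term is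
at least `α λ₂ ‖e‖²`. In the pseudogradient term, strong monotonicity of `F` along the consensus
direction gives `l̲ ‖y‖²`, and the Lipschitz bounds cost at most `2 l ‖y‖ ‖e‖ + l ‖e‖²`. The gain
condition makes the resulting quadratic form in `(‖y‖, ‖e‖)` positive definite, and
`‖Z - Z*‖² = N ‖y‖² + ‖e‖²`.
-/

open Finset Matrix

section

variable {N : ℕ}

lemma vnorm_sq (x : Fin N → ℝ) : vnorm x ^ 2 = ∑ i, x i ^ 2 :=
  Real.sq_sqrt (by positivity)

lemma mnorm_sq (A : Matrix (Fin N) (Fin N) ℝ) : mnorm A ^ 2 = ∑ i, ∑ j, A i j ^ 2 :=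
  Real.sq_sqrt (by positivity)

lemma abs_sum_mul_le_vnorm_mul (u v : Fin N → ℝ) : |∑ i, u i * v i| ≤ vnorm u * vnorm v := by
  rw [← Real.sqrt_sq_eq_abs, vnorm, vnorm, ← Real.sqrt_mul (by positivity)]
  exact Real.sqrt_le_sqrt (sum_mul_sq_le_sq_mul_sq univ u v)

lemma neg_mul_le_sum_mul_of_vnorm_le {u v : Fin N → ℝ} {p q : ℝ}
    (hu : vnorm u ≤ p) (hv : vnorm v ≤ q) : -(p * q) ≤ ∑ i, u i * v i := by
  have hp : 0 ≤ p := (Real.sqrt_nonneg _).trans hu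
  have := mul_le_mul hu hv (Real.sqrt_nonneg _) hp
  linarith [neg_abs_le (∑ i, u i * v i), abs_sum_mul_le_vnorm_mul u v]

lemma vnorm_diag_le_mnorm (A : Matrix (Fin N) (Fin N) ℝ) : vnorm (fun i => A i i) ≤ mnorm A :=
  Real.sqrt_le_sqrt <| sum_le_sum fun i _ =>
    single_le_sum (f := fun j => A i j ^ 2) (fun _ _ => sq_nonneg _) (mem_univ i)

lemma exists_eq_replicateRow_add_sum_col_eq_zero (E : Matrix (Fin N) (Fin N) ℝ) :
    ∃ (y : Fin N → ℝ) (e : Matrix (Fin N) (Fin N) ℝ),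
      E = replicateRow (Fin N) y + e ∧ ∀ j, ∑ i, e i j = 0 := by
  refine ⟨fun j => (∑ i, E i j) / N, _, (add_sub_cancel _ _).symm, fun j => ?_⟩
  rcases Nat.eq_zero_or_pos N with rfl | hN
  · simp
  · have : (N : ℝ) ≠ 0 := by positivity
    simp [sum_sub_distrib, mul_div_cancel₀, this]

lemma mnorm_replicateRow_add_sq {y : Fin N → ℝ} {e : Matrix (Fin N) (Fin N) ℝ}
    (he : ∀ j, ∑ i, e i j = 0) :
    mnorm (replicateRow (Fin N) y + e) ^ 2 = N * vnorm y ^ 2 + mnorm e ^ 2 := by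
  have hcross : ∑ i, ∑ j, 2 * y j * e i j = 0 := by
    rw [sum_comm]; simp [mul_assoc, ← mul_sum, he]
  simp only [mnorm_sq, vnorm_sq, Matrix.add_apply, replicateRow_apply, add_sq, sum_add_distrib,
    hcross]
  simp

lemma laplacian_quadForm_const_add {L : Matrix (Fin N) (Fin N) ℝ}
    (hrow : ∀ i, ∑ j, L i j = 0) (hcol : ∀ j, ∑ i, L i j = 0) (c : ℝ) (x : Fin N → ℝ) :
    ∑ i, (c + x i) * ∑ k, L i k * (c + x k) = ∑ i, ∑ k, x i * ((L i k + L k i) / 2) * x k := by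
  have hLc : ∀ i, ∑ k, L i k * c = 0 := fun i => by rw [← sum_mul, hrow, zero_mul]
  have hcL : ∑ i, c * ∑ k, L i k * x k = 0 := by
    simp only [mul_sum]; rw [sum_comm]
    simp [← mul_assoc, ← sum_mul, ← mul_sum, hcol]
  have hsym : ∑ i, ∑ k, x i * L k i * x k = ∑ i, ∑ k, x i * L i k * x k := by
    rw [sum_comm]; exact sum_congr rfl fun _ _ => sum_congr rfl fun _ _ => by ring
  simp only [mul_add, sum_add_distrib, hLc, add_mul, hcL, zero_add]
  calc ∑ i, x i * ∑ k, L i k * x k = ∑ i, ∑ k, x i * L i k * x k := by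
        simp only [mul_sum, mul_assoc]
    _ = ((∑ i, ∑ k, x i * L i k * x k) + ∑ i, ∑ k, x i * L k i * x k) / 2 := by
        rw [hsym]; ring
    _ = _ := by
        simp only [← sum_add_distrib, sum_div]
        exact sum_congr rfl fun _ _ => sum_congr rfl fun _ _ => by ring

lemma mul_mnorm_sq_le_laplacian_inner {L : Matrix (Fin N) (Fin N) ℝ}
    (hrow : ∀ i, ∑ j, L i j = 0) (hcol : ∀ j, ∑ i, L i j = 0) {lam2 : ℝ}
    (hlam2spec : ∀ x : Fin N → ℝ, (∑ i, x i) = 0 →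
      lam2 * (vnorm x) ^ 2 ≤ ∑ i, ∑ j, x i * ((L i j + L j i) / 2) * x j)
    (y : Fin N → ℝ) {e : Matrix (Fin N) (Fin N) ℝ} (he : ∀ j, ∑ i, e i j = 0) :
    lam2 * mnorm e ^ 2 ≤ ∑ i, ∑ j, (replicateRow (Fin N) y + e) i j *
      ∑ k, L i k * (replicateRow (Fin N) y + e) k j := by
  rw [mnorm_sq, sum_comm, mul_sum, sum_comm]
  refine sum_le_sum fun j _ => ?_
  have hj := hlam2spec (fun i => e i j) (he j)
  rw [vnorm_sq, ← laplacian_quadForm_const_add hrow hcol (y j)] at hj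
  simpa only [Matrix.add_apply, replicateRow_apply] using hj

lemma pseudogradient_term_lower_bound {F : (Fin N → ℝ) → (Fin N → ℝ)}
    {bF : Matrix (Fin N) (Fin N) ℝ → (Fin N → ℝ)} (hbF : ∀ Z i, bF Z i = F (Z i) i)
    {lunder l : ℝ}
    (hmono : ∀ x y : Fin N → ℝ,
      lunder * (vnorm (x - y)) ^ 2 ≤ ∑ i, (F x i - F y i) * (x i - y i))
    (hFlip : ∀ x y : Fin N → ℝ, vnorm (F x - F y) ≤ l * vnorm (x - y))
    (hbFlip : ∀ Z W : Matrix (Fin N) (Fin N) ℝ, vnorm (bF Z - bF W) ≤ l * mnorm (Z - W))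
    {Z : Matrix (Fin N) (Fin N) ℝ} {zstar y : Fin N → ℝ} {e : Matrix (Fin N) (Fin N) ℝ}
    (hZ : Z - replicateRow (Fin N) zstar = replicateRow (Fin N) y + e) :
    lunder * vnorm y ^ 2 - 2 * l * (vnorm y * mnorm e) - l * mnorm e ^ 2 ≤
      ∑ i, (Z - replicateRow (Fin N) zstar) i i *
        (bF Z i - bF (replicateRow (Fin N) zstar) i) := by
  -- Compare `Z` with the consensus point `1 wᵀ`, where `𝐅(1 wᵀ) = F w`.
  set w := zstar + y
  have hwz : w - zstar = y := add_sub_cancel_left zstar y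
  have hZw : Z - replicateRow (Fin N) w = e := by
    ext i j
    have := congrFun (congrFun hZ i) j
    simp only [Matrix.sub_apply, Matrix.add_apply, replicateRow_apply] at this
    simp only [Matrix.sub_apply, replicateRow_apply, w, Pi.add_apply]
    linarith
  have hbFw : ∀ v i, bF (replicateRow (Fin N) v) i = F v i := fun v i => hbF _ i
  have hmono_w : lunder * vnorm y ^ 2 ≤ ∑ i, (F w i - F zstar i) * y i := by
    simpa only [hwz, w, Pi.add_apply, add_sub_cancel_left] using hmono w zstar
  have hy : -(vnorm y * (l * mnorm e)) ≤ ∑ i, y i * (bF Z - bF (replicateRow (Fin N) w)) i :=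
    neg_mul_le_sum_mul_of_vnorm_le le_rfl (hZw ▸ hbFlip _ _)
  have he : -(mnorm e * (l * mnorm e)) ≤
      ∑ i, e i i * (bF Z - bF (replicateRow (Fin N) w)) i :=
    neg_mul_le_sum_mul_of_vnorm_le (vnorm_diag_le_mnorm e) (hZw ▸ hbFlip _ _)
  have he' : -(mnorm e * (l * vnorm y)) ≤ ∑ i, e i i * (F w - F zstar) i :=
    neg_mul_le_sum_mul_of_vnorm_le (vnorm_diag_le_mnorm e) (hwz ▸ hFlip _ _)
  have hsplit : ∑ i, (Z - replicateRow (Fin N) zstar) i i *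
        (bF Z i - bF (replicateRow (Fin N) zstar) i) =
      (∑ i, (F w i - F zstar i) * y i) + (∑ i, y i * (bF Z - bF (replicateRow (Fin N) w)) i) +
        (∑ i, e i i * (bF Z - bF (replicateRow (Fin N) w)) i) +
        ∑ i, e i i * (F w - F zstar) i := by
    simp only [← sum_add_distrib, hZ, hbFw, Matrix.add_apply, replicateRow_apply, Pi.sub_apply]
    exact sum_congr rfl fun _ _ => by ring
  rw [hsplit]
  linarith

end

/-- The gap equals `((l̲ a - l b)² + n (l a - c b)²) / (n c + l̲)`. -/
lemma quadratic_form_lower_bound {lunder c l n : ℝ} (hlunder : 0 < lunder) (hc : 0 ≤ c)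
    (hn : 0 ≤ n) (a b : ℝ) :
    (lunder * c - l ^ 2) / (n * c + lunder) * (n * a ^ 2 + b ^ 2) ≤
      lunder * a ^ 2 - 2 * l * (a * b) + c * b ^ 2 := by
  rw [div_mul_eq_mul_div, div_le_iff₀ (by positivity)]
  nlinarith [sq_nonneg (lunder * a - l * b), mul_nonneg hn (sq_nonneg (l * a - c * b))]

theorem lyapunov_decrease_general
    (N : ℕ)
    -- pseudogradient `F` and extended pseudogradient `𝐅` (row-wise evaluation)
    (F : (Fin N → ℝ) → (Fin N → ℝ)) (bF : Matrix (Fin N) (Fin N) ℝ → (Fin N → ℝ))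
    (hbF : ∀ Z i, bF Z i = F (Z i) i)
    (lunder l : ℝ) (hlunder : 0 < lunder) (hl : 0 < l)
    -- (i) F is l̲-strongly monotone; F and 𝐅 are l-Lipschitz
    (hmono : ∀ x y : Fin N → ℝ,
      lunder * (vnorm (x - y)) ^ 2 ≤ ∑ i, (F x i - F y i) * (x i - y i))
    (hFlip : ∀ x y : Fin N → ℝ, vnorm (F x - F y) ≤ l * vnorm (x - y))
    (hbFlip : ∀ Z W : Matrix (Fin N) (Fin N) ℝ,
      vnorm (bF Z - bF W) ≤ l * mnorm (Z - W))
    -- (ii) L weight-balanced: L1 = 0, 1ᵀL = 0, and the λ₂ lower bound on Sym(L)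
    (L : Matrix (Fin N) (Fin N) ℝ)
    (hrow : ∀ i, ∑ j, L i j = 0) (hcol : ∀ j, ∑ i, L i j = 0)
    (lam2 : ℝ) (hlam2 : 0 < lam2)
    (hlam2spec : ∀ x : Fin N → ℝ, (∑ i, x i) = 0 →
      lam2 * (vnorm x) ^ 2 ≤ ∑ i, ∑ j, x i * ((L i j + L j i) / 2) * x j)
    -- (iii) z* and Z* = 1 (z*)ᵀ
    (zstar : Fin N → ℝ) (Zstar : Matrix (Fin N) (Fin N) ℝ)
    (hZstar : Zstar = Matrix.of (fun _ j => zstar j))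
    -- (iv) the gain condition
    (α : ℝ) (hα : α > (1 / lam2) * (l ^ 2 / lunder + l)) :
    ∃ ν > (0:ℝ), ∀ Z : Matrix (Fin N) (Fin N) ℝ,
      ν * (mnorm (Z - Zstar)) ^ 2 ≤
        α * (∑ i, ∑ j, (Z - Zstar) i j * (∑ k, L i k * (Z - Zstar) k j)) +
          ∑ i, (Z - Zstar) i i * (bF Z i - bF Zstar i) := by
  rw [one_div_mul_eq_div, gt_iff_lt, div_lt_iff₀ hlam2] at hα
  set c := α * lam2 - l
  have hc : l ^ 2 < lunder * c := by
    rw [← div_lt_iff₀' hlunder]; linarith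
  have hc0 : 0 < c := pos_of_mul_pos_right ((sq_nonneg l).trans_lt hc) hlunder.le
  have hα0 : 0 < α := pos_of_mul_pos_left (by linarith : 0 < α * lam2) hlam2.le
  refine ⟨(lunder * c - l ^ 2) / (N * c + lunder), div_pos (sub_pos.2 hc) (by positivity),
    fun Z => ?_⟩
  obtain rfl : Zstar = replicateRow (Fin N) zstar := hZstar
  obtain ⟨y, e, hE, he⟩ := exists_eq_replicateRow_add_sum_col_eq_zero (Z - replicateRow _ zstar)
  have hlap := mul_mnorm_sq_le_laplacian_inner hrow hcol hlam2spec y he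
  have hpg := pseudogradient_term_lower_bound hbF hmono hFlip hbFlip hE
  have hquad := quadratic_form_lower_bound hlunder hc0.le (Nat.cast_nonneg N) (l := l)
    (vnorm y) (mnorm e)
  rw [hE] at hpg ⊢
  rw [mnorm_replicateRow_add_sq he]
  linarith [mul_le_mul_of_nonneg_left hlap hα0.le]

/-- Under the gain condition `α > (1/λ₂)(l²/l̲ + l)` there is `ν > 0` with
`α⟨Z − Z*, L(Z − Z*)⟩ + Σ_i (Z − Z*)_{ii}(𝐅(Z)_i − 𝐅(Z*)_i) ≥ ν‖Z − Z*‖²`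
for every `Z`, where `⟨·,·⟩` and `‖·‖` are the Frobenius inner product and norm. -/
theorem lyapunov_decrease
    (N : ℕ) (hN : 1 ≤ N)
    -- pseudogradient `F` and extended pseudogradient `𝐅` (row-wise evaluation)
    (F : (Fin N → ℝ) → (Fin N → ℝ)) (bF : Matrix (Fin N) (Fin N) ℝ → (Fin N → ℝ))
    (hbF : ∀ Z i, bF Z i = F (Z i) i)
    (lunder l : ℝ) (hlunder : 0 < lunder) (hl : 0 < l)
    -- (i) F is l̲-strongly monotone; F and 𝐅 are l-Lipschitz
    (hmono : ∀ x y : Fin N → ℝ,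
      lunder * (vnorm (x - y)) ^ 2 ≤ ∑ i, (F x i - F y i) * (x i - y i))
    (hFlip : ∀ x y : Fin N → ℝ, vnorm (F x - F y) ≤ l * vnorm (x - y))
    (hbFlip : ∀ Z W : Matrix (Fin N) (Fin N) ℝ,
      vnorm (bF Z - bF W) ≤ l * mnorm (Z - W))
    -- (ii) L weight-balanced: L1 = 0, 1ᵀL = 0, and the λ₂ lower bound on Sym(L)
    (L : Matrix (Fin N) (Fin N) ℝ)
    (hrow : ∀ i, ∑ j, L i j = 0) (hcol : ∀ j, ∑ i, L i j = 0)
    (lam2 : ℝ) (hlam2 : 0 < lam2)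
    (hlam2spec : ∀ x : Fin N → ℝ, (∑ i, x i) = 0 →
      lam2 * (vnorm x) ^ 2 ≤ ∑ i, ∑ j, x i * ((L i j + L j i) / 2) * x j)
    -- (iii) z* and Z* = 1 (z*)ᵀ
    (zstar : Fin N → ℝ) (Zstar : Matrix (Fin N) (Fin N) ℝ)
    (hZstar : Zstar = Matrix.of (fun _ j => zstar j))
    -- (iv) the gain condition
    (α : ℝ) (hα : α > (1 / lam2) * (l ^ 2 / lunder + l)) :
    ∃ ν > (0:ℝ), ∀ Z : Matrix (Fin N) (Fin N) ℝ,
      ν * (mnorm (Z - Zstar)) ^ 2 ≤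
        α * (∑ i, ∑ j, (Z - Zstar) i j * (∑ k, L i k * (Z - Zstar) k j)) +
          ∑ i, (Z - Zstar) i i * (bF Z i - bF Zstar i) :=
  lyapunov_decrease_general N F bF hbF lunder l hlunder hl hmono hFlip hbFlip L hrow hcol lam2 hlam2
    hlam2spec zstar Zstar hZstar α hα
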